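/- arXiv:2305.12324 — 2 statements merged into one kernel-verified Lean document; each statement's English description precedes it below -/
import Mathlib

section
/- Let Γ be a finite simple graph with a Lewis partition ρ1, ρ2, ρ3, ρ4 (ρ1 ∪ ρ2 and ρ3 ∪ ρ4 induce complete subgraphs, no edges between ρ1 and ρ3 ∪ ρ4, no edges between ρ4 and ρ1 ∪ ρ2, every vertex of ρ2 adjacent to some vertex of ρ3 and vice versa, all parts nonempty). If |ρ2| ≥ 2 and |ρ3| ≥ 2, then Γ has no cut vertex. -/
/-- Lewis partition with `|ρ2| ≥ 2` and `|ρ3| ≥ 2`: the graph has no cut vertex, i.e.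
deleting any vertex does not increase the number of connected components. -/
theorem stmt_16 {V : Type*} [Fintype V] (G : SimpleGraph V)
    (ρ1 ρ2 ρ3 ρ4 : Set V)
    (hne1 : ρ1.Nonempty) (hne2 : ρ2.Nonempty) (hne3 : ρ3.Nonempty) (hne4 : ρ4.Nonempty)
    (hdisj : [ρ1, ρ2, ρ3, ρ4].Pairwise Disjoint)
    (hcover : ρ1 ∪ ρ2 ∪ ρ3 ∪ ρ4 = Set.univ)
    (hcomp12 : ∀ u ∈ ρ1 ∪ ρ2, ∀ v ∈ ρ1 ∪ ρ2, u ≠ v → G.Adj u v)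
    (hcomp34 : ∀ u ∈ ρ3 ∪ ρ4, ∀ v ∈ ρ3 ∪ ρ4, u ≠ v → G.Adj u v)
    (hnadj1 : ∀ u ∈ ρ1, ∀ v ∈ ρ3 ∪ ρ4, ¬ G.Adj u v)
    (hnadj4 : ∀ u ∈ ρ4, ∀ v ∈ ρ1 ∪ ρ2, ¬ G.Adj u v)
    (hadj23 : ∀ u ∈ ρ2, ∃ v ∈ ρ3, G.Adj u v)
    (hadj32 : ∀ v ∈ ρ3, ∃ u ∈ ρ2, G.Adj v u)
    (h2 : 2 ≤ ρ2.ncard) (h3 : 2 ≤ ρ3.ncard) :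
    ∀ v : V, ¬ (Nat.card G.ConnectedComponent <
      Nat.card (G.induce {u | u ≠ v}).ConnectedComponent) := by
  intro v
  simp only [List.pairwise_cons] at hdisj
  have h23 : Disjoint ρ2 ρ3 := by tauto
  set s : Set V := {u | u ≠ v} with hs
  -- find an edge a∈ρ2, b∈ρ3 avoiding v
  obtain ⟨a, ha2, b, hb3, hab, hav, hbv⟩ :
      ∃ a ∈ ρ2, ∃ b ∈ ρ3, G.Adj a b ∧ a ≠ v ∧ b ≠ v := by
    by_cases hv3 : v ∈ ρ3
    · obtain ⟨b, hb3, hbv⟩ := Set.exists_ne_of_one_lt_ncard (show 1 < ρ3.ncard by omega) v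
      obtain ⟨a, ha2, hadj⟩ := hadj32 b hb3
      exact ⟨a, ha2, b, hb3, hadj.symm, fun h => h23.ne_of_mem ha2 hv3 (h ▸ rfl), hbv⟩
    · obtain ⟨a, ha2, hav⟩ : ∃ a ∈ ρ2, a ≠ v := by
        by_cases hv2 : v ∈ ρ2
        · obtain ⟨a, ha2, hav⟩ := Set.exists_ne_of_one_lt_ncard (show 1 < ρ2.ncard by omega) v
          exact ⟨a, ha2, hav⟩
        · obtain ⟨a, ha2⟩ := hne2
          exact ⟨a, ha2, fun h => hv2 (h ▸ ha2)⟩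
      obtain ⟨b, hb3, hadj⟩ := hadj23 a ha2
      exact ⟨a, ha2, b, hb3, hadj, hav, fun h => hv3 (h ▸ hb3)⟩
  have hLR : ∀ u : V, u ∈ ρ1 ∪ ρ2 ∨ u ∈ ρ3 ∪ ρ4 := by
    intro u
    have : u ∈ ρ1 ∪ ρ2 ∪ ρ3 ∪ ρ4 := hcover ▸ Set.mem_univ u
    rcases this with ((h | h) | h) | h
    · exact Or.inl (Or.inl h)
    · exact Or.inl (Or.inr h)
    · exact Or.inr (Or.inl h)
    · exact Or.inr (Or.inr h)
  have haL : a ∈ ρ1 ∪ ρ2 := Or.inr ha2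
  have hbR : b ∈ ρ3 ∪ ρ4 := Or.inl hb3
  set H := G.induce s with hH
  let A : s := ⟨a, hav⟩
  let B : s := ⟨b, hbv⟩
  have hadjAB : H.Adj A B := hab
  have step : ∀ x : s, H.Reachable x A ∨ H.Reachable x B := by
    intro ⟨x, hx⟩
    rcases hLR x with hxL | hxR
    · left
      by_cases hxa : x = a
      · exact ⟨(Subtype.ext hxa : (⟨x,hx⟩ : s) = A) ▸ SimpleGraph.Walk.nil⟩
      · exact (show H.Adj ⟨x, hx⟩ A from hcomp12 x hxL a haL hxa).reachable
    · right
      by_cases hxb : x = b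
      · exact ⟨(Subtype.ext hxb : (⟨x,hx⟩ : s) = B) ▸ SimpleGraph.Walk.nil⟩
      · exact (show H.Adj ⟨x, hx⟩ B from hcomp34 x hxR b hbR hxb).reachable
  have hpre : H.Preconnected := by
    intro x y
    have hAB : H.Reachable A B := hadjAB.reachable
    rcases step x with hx | hx <;> rcases step y with hy | hy
    · exact hx.trans hy.symm
    · exact hx.trans (hAB.trans hy.symm)
    · exact hx.trans (hAB.symm.trans hy.symm)
    · exact hx.trans hy.symm
  have hsub : Subsingleton H.ConnectedComponent := by
    constructor
    intro c d
    induction c using SimpleGraph.ConnectedComponent.ind with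
    | _ x =>
      induction d using SimpleGraph.ConnectedComponent.ind with
      | _ y => exact SimpleGraph.ConnectedComponent.eq.mpr (hpre x y)
  have hnonempty : Nonempty s := ⟨A⟩
  have hcard1 : Nat.card H.ConnectedComponent = 1 :=
    Nat.card_eq_one_iff_unique.mpr ⟨hsub, ⟨H.connectedComponentMk A⟩⟩
  have hpos : 0 < Nat.card G.ConnectedComponent := by
    have : Nonempty G.ConnectedComponent := ⟨G.connectedComponentMk a⟩
    exact Nat.card_pos
  omega
end

section
/- Let Γ be a finite connected simple graph in which every vertex has odd degree and which satisfies Pálfy's condition (among any three distinct vertices some two are adjacent). If Γ is not 2-connected (i.e., has a cut vertex), and Γ has a partition into two complete blocks sharing the cut vertex, then a contradiction follows; hence if every block of Γ is complete and every vertex of Γ has odd degree, Γ is itself a block (has no cut vertex). -/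
/-- A connected graph satisfying Pálfy's condition in which every vertex has odd degree
cannot be the union of two complete blocks `B1`, `B2` (each with at least two vertices)
meeting in exactly one cut vertex `v`; hence such a graph with all blocks complete has
no cut vertex, i.e. it is a block. -/
theorem stmt_18 {V : Type*} [Fintype V] (G : SimpleGraph V) [DecidableRel G.Adj]
    (hconn : G.Connected)
    (hodd : ∀ x : V, Odd (G.degree x))
    (hPalfy : ∀ x y z : V, x ≠ y → y ≠ z → x ≠ z → G.Adj x y ∨ G.Adj y z ∨ G.Adj x z)
    (B1 B2 : Set V) (v : V)
    (hcover : B1 ∪ B2 = Set.univ) (hinter : B1 ∩ B2 = {v})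
    (h1 : 2 ≤ B1.ncard) (h2 : 2 ≤ B2.ncard)
    (hadj : ∀ x y : V, G.Adj x y ↔
      (x ≠ y ∧ ((x ∈ B1 ∧ y ∈ B1) ∨ (x ∈ B2 ∧ y ∈ B2)))) :
    False := by
  classical
  have hvB1 : v ∈ B1 := by
    have : v ∈ B1 ∩ B2 := hinter ▸ rfl
    exact this.1
  have hvB2 : v ∈ B2 := by
    have : v ∈ B1 ∩ B2 := hinter ▸ rfl
    exact this.2
  have hdeg : ∀ x : V, G.degree x = (G.neighborSet x).ncard := by
    intro x
    rw [Set.ncard_eq_toFinset_card']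
    simp [SimpleGraph.degree, SimpleGraph.neighborFinset]
  -- a witness in B1 other than v
  obtain ⟨a, haB1, hav⟩ : ∃ a ∈ B1, a ≠ v := by
    by_contra h
    push_neg at h
    have hsub : B1 ⊆ {v} := fun x hx => h x hx
    have := Set.ncard_le_ncard hsub (Set.finite_singleton v)
    rw [Set.ncard_singleton] at this
    omega
  obtain ⟨b, hbB2, hbv⟩ : ∃ b ∈ B2, b ≠ v := by
    by_contra h
    push_neg at h
    have hsub : B2 ⊆ {v} := fun x hx => h x hx
    have := Set.ncard_le_ncard hsub (Set.finite_singleton v)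
    rw [Set.ncard_singleton] at this
    omega
  have haB2 : a ∉ B2 := by
    intro h
    have : a ∈ B1 ∩ B2 := ⟨haB1, h⟩
    rw [hinter] at this
    exact hav this
  have hbB1 : b ∉ B1 := by
    intro h
    have : b ∈ B1 ∩ B2 := ⟨h, hbB2⟩
    rw [hinter] at this
    exact hbv this
  -- neighbor sets
  have hna : G.neighborSet a = B1 \ {a} := by
    ext y
    simp only [SimpleGraph.mem_neighborSet, hadj, Set.mem_diff, Set.mem_singleton_iff]
    constructor
    · rintro ⟨hne, ⟨_, hy⟩ | ⟨ha2, _⟩⟩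
      · exact ⟨hy, fun h => hne h.symm⟩
      · exact absurd ha2 haB2
    · rintro ⟨hy, hne⟩
      exact ⟨fun h => hne h.symm, Or.inl ⟨haB1, hy⟩⟩
  have hnb : G.neighborSet b = B2 \ {b} := by
    ext y
    simp only [SimpleGraph.mem_neighborSet, hadj, Set.mem_diff, Set.mem_singleton_iff]
    constructor
    · rintro ⟨hne, ⟨hb1, _⟩ | ⟨_, hy⟩⟩
      · exact absurd hb1 hbB1
      · exact ⟨hy, fun h => hne h.symm⟩
    · rintro ⟨hy, hne⟩
      exact ⟨fun h => hne h.symm, Or.inr ⟨hbB2, hy⟩⟩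
  have hnv : G.neighborSet v = Set.univ \ {v} := by
    ext y
    simp only [SimpleGraph.mem_neighborSet, hadj, Set.mem_diff, Set.mem_univ,
      Set.mem_singleton_iff, true_and]
    constructor
    · rintro ⟨hne, _⟩
      exact fun h => hne h.symm
    · intro hne
      have hy : y ∈ B1 ∪ B2 := hcover ▸ Set.mem_univ y
      refine ⟨fun h => hne h.symm, ?_⟩
      rcases hy with hy | hy
      · exact Or.inl ⟨hvB1, hy⟩
      · exact Or.inr ⟨hvB2, hy⟩
  -- cardinalities
  have hda : G.degree a = B1.ncard - 1 := by
    rw [hdeg, hna, Set.ncard_diff_singleton_of_mem haB1]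
  have hdb : G.degree b = B2.ncard - 1 := by
    rw [hdeg, hnb, Set.ncard_diff_singleton_of_mem hbB2]
  have hdv : G.degree v = (Set.univ : Set V).ncard - 1 := by
    rw [hdeg, hnv, Set.ncard_diff_singleton_of_mem (Set.mem_univ v)]
  have hcard : (Set.univ : Set V).ncard + 1 = B1.ncard + B2.ncard := by
    have := Set.ncard_union_add_ncard_inter B1 B2 (Set.toFinite _) (Set.toFinite _)
    rw [hcover, hinter, Set.ncard_singleton] at this
    omega
  obtain ⟨k1, hk1⟩ := hodd a
  obtain ⟨k2, hk2⟩ := hodd b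
  obtain ⟨k3, hk3⟩ := hodd v
  rw [hda] at hk1
  rw [hdb] at hk2
  rw [hdv] at hk3
  have huniv : 1 ≤ (Set.univ : Set V).ncard := by omega
  omega
end
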